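/- arXiv:2011.06258 — 4 statements merged into one kernel-verified Lean document; each statement's English description precedes it below -/
import Mathlib

section
/- Fix k ∈ {1,2,3} and j ∈ {0,1,2,3}, and let W(θ) = exp(−iθσₖ) = I cos θ − i σₖ sin θ. For any 2×2 complex matrices A and C, with B = D = σⱼ: (1/(2π)) ∫₀^{2π} Tr[W(θ) A W(θ)† B] · Tr[W(θ) C W(θ)† D] dθ = (1/2 + (δ_{j0}+δ_{jk})/2) Tr[AB] Tr[CD] + (−1/2 + (δ_{j0}+δ_{jk})/2) Tr[ABσₖ] Tr[CDσₖ]. -/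
open Matrix Complex intervalIntegral

noncomputable def σ : Fin 4 → Matrix (Fin 2) (Fin 2) ℂ :=
  ![1, !![0, 1; 1, 0], !![0, -Complex.I; Complex.I, 0], !![1, 0; 0, -1]]

/-- Kronecker delta valued in ℂ. -/
def δ (j k : Fin 4) : ℂ := if j = k then 1 else 0

/-- The rotation `W(θ) = exp(-iθσₖ) = I cos θ - i σₖ sin θ`. -/
noncomputable def W (k : Fin 4) (θ : ℝ) : Matrix (Fin 2) (Fin 2) ℂ :=
  (Real.cos θ : ℂ) • (1 : Matrix (Fin 2) (Fin 2) ℂ)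
    - (Complex.I * (Real.sin θ : ℂ)) • σ k

lemma sin4pi : Real.sin (2*(2*Real.pi)) = 0 := by
  rw [show 2*(2*Real.pi) = (4:ℕ)*Real.pi by push_cast; ring]; exact Real.sin_nat_mul_pi 4

lemma cos4pi : Real.cos (2*(2*Real.pi)) = 1 := by
  rw [show 2*(2*Real.pi) = (2:ℕ)*(2*Real.pi) by push_cast; ring]; exact Real.cos_nat_mul_two_pi 2

lemma J1 : ∫ θ in (0:ℝ)..(2*Real.pi), Real.cos (2*θ) = 0 := by
  rw [intervalIntegral.integral_comp_mul_left Real.cos (by norm_num : (2:ℝ) ≠ 0)]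
  simp [integral_cos, sin4pi]

lemma J2 : ∫ θ in (0:ℝ)..(2*Real.pi), Real.sin (2*θ) = 0 := by
  rw [intervalIntegral.integral_comp_mul_left Real.sin (by norm_num : (2:ℝ) ≠ 0)]
  simp [integral_sin, cos4pi]

lemma J3 : ∫ θ in (0:ℝ)..(2*Real.pi), Real.cos (2*θ)^2 = Real.pi := by
  rw [intervalIntegral.integral_comp_mul_left (fun x => Real.cos x ^ 2) (by norm_num : (2:ℝ) ≠ 0)]
  simp [integral_cos_sq, sin4pi]

lemma J4 : ∫ θ in (0:ℝ)..(2*Real.pi), Real.sin (2*θ)^2 = Real.pi := by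
  rw [intervalIntegral.integral_comp_mul_left (fun x => Real.sin x ^ 2) (by norm_num : (2:ℝ) ≠ 0)]
  simp [integral_sin_sq, sin4pi]

lemma J5 : ∫ θ in (0:ℝ)..(2*Real.pi), Real.sin (2*θ) * Real.cos (2*θ) = 0 := by
  rw [intervalIntegral.integral_comp_mul_left (fun x => Real.sin x * Real.cos x)
    (by norm_num : (2:ℝ) ≠ 0)]
  simp [integral_sin_mul_cos₁, sin4pi]

lemma intOfReal (a b : ℝ) (f : ℝ → ℝ) :
    (∫ x in a..b, ((f x : ℝ):ℂ)) = ((∫ x in a..b, f x : ℝ):ℂ) := by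
  have := @RCLike.intervalIntegral_ofReal ℂ _ a b MeasureTheory.volume f
  simpa using this

set_option maxHeartbeats 1000000 in
lemma key (u v w u' v' w' : ℂ) :
    (∫ θ in (0:ℝ)..(2*Real.pi),
      (u + v*((Real.cos (2*θ):ℝ):ℂ) + w*((Real.sin (2*θ):ℝ):ℂ)) *
      (u' + v'*((Real.cos (2*θ):ℝ):ℂ) + w'*((Real.sin (2*θ):ℝ):ℂ)))
    = 2*Real.pi*(u*u') + Real.pi*(v*v') + Real.pi*(w*w') := by
  have h : ∀ θ:ℝ,
      (u + v*((Real.cos (2*θ):ℝ):ℂ) + w*((Real.sin (2*θ):ℝ):ℂ)) *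
      (u' + v'*((Real.cos (2*θ):ℝ):ℂ) + w'*((Real.sin (2*θ):ℝ):ℂ))
      = u*u' + (u*v'+v*u') * ((Real.cos (2*θ):ℝ):ℂ)
        + ((u*w'+w*u') * ((Real.sin (2*θ):ℝ):ℂ)
        + ((v*v') * ((Real.cos (2*θ)^2:ℝ):ℂ)
        + ((v*w'+w*v') * ((Real.sin (2*θ)*Real.cos (2*θ):ℝ):ℂ)
        + (w*w') * ((Real.sin (2*θ)^2:ℝ):ℂ)))) := by
    intro θ; push_cast; ring
  simp only [h]
  have hI : ∀ (c : ℂ) (f : ℝ → ℝ), Continuous f →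
      IntervalIntegrable (fun θ => c * ((f θ:ℝ):ℂ)) MeasureTheory.volume 0 (2*Real.pi) :=
    fun c f hf => ((continuous_const.mul (Complex.continuous_ofReal.comp hf)).intervalIntegrable _ _)
  have hmul : ∀ (c : ℂ) (f : ℝ → ℝ), (∫ θ in (0:ℝ)..(2*Real.pi), c * ((f θ:ℝ):ℂ))
      = c * ((∫ θ in (0:ℝ)..(2*Real.pi), f θ : ℝ):ℂ) := by
    intro c f
    rw [intervalIntegral.integral_const_mul, intOfReal]
  have c1 : Continuous fun θ:ℝ => Real.cos (2*θ) := by fun_prop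
  have s1 : Continuous fun θ:ℝ => Real.sin (2*θ) := by fun_prop
  have i1 := hI (u*v'+v*u') _ c1
  have i2 := hI (u*w'+w*u') _ s1
  have i3 := hI (v*v') (fun θ => Real.cos (2*θ)^2) (c1.pow 2)
  have i4 := hI (v*w'+w*v') (fun θ => Real.sin (2*θ) * Real.cos (2*θ)) (s1.mul c1)
  have i5 := hI (w*w') (fun θ => Real.sin (2*θ)^2) (s1.pow 2)
  rw [intervalIntegral.integral_add (intervalIntegrable_const.add i1)
        (i2.add (i3.add (i4.add i5))),
      intervalIntegral.integral_add intervalIntegrable_const i1,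
      intervalIntegral.integral_add i2 (i3.add (i4.add i5)),
      intervalIntegral.integral_add i3 (i4.add i5),
      intervalIntegral.integral_add i4 i5]
  rw [intervalIntegral.integral_const, hmul, hmul, hmul, hmul, hmul, J1, J2, J3, J4, J5]
  rw [Complex.real_smul]
  push_cast
  ring

lemma conjT (k : Fin 4) (hH : (σ k)ᴴ = σ k) (θ : ℝ) :
    (W k θ)ᴴ = (Real.cos θ : ℂ) • (1 : Matrix (Fin 2) (Fin 2) ℂ)
      + (Complex.I * (Real.sin θ : ℂ)) • σ k := by
  have h2 : (starRingEnd ℂ) (Complex.I * (Real.sin θ:ℂ)) = -(Complex.I * (Real.sin θ:ℂ)) := by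
    rw [_root_.map_mul, Complex.conj_I, Complex.conj_ofReal]; ring
  rw [W, conjTranspose_sub, conjTranspose_smul, conjTranspose_smul, conjTranspose_one, hH]
  simp only [Complex.star_def]
  rw [Complex.conj_ofReal, h2, neg_smul, sub_neg_eq_add]

lemma trace_expand (P A Q : Matrix (Fin 2) (Fin 2) ℂ) (c s : ℂ) :
    ((c • (1:Matrix (Fin 2) (Fin 2) ℂ) - s • P) * A * (c • 1 + s • P) * Q).trace
    = c^2 * (A*Q).trace + c*s*((A*(P*Q)).trace - (A*(Q*P)).trace)
      - s^2 * (A*(P*Q*P)).trace := by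
  have h : (c • (1:Matrix (Fin 2) (Fin 2) ℂ) - s • P) * A * (c • 1 + s • P) * Q
      = (c*c) • (A*Q) + (c*s) • (A*(P*Q)) - (c*s) • (P*(A*Q)) - (s*s) • (P*(A*(P*Q))) := by
    simp only [Matrix.smul_mul, Matrix.mul_smul, Matrix.add_mul, Matrix.mul_add,
      Matrix.sub_mul, Matrix.one_mul, Matrix.mul_one, smul_smul, Matrix.mul_assoc]
    module
  rw [h]
  simp only [trace_add, trace_sub, trace_smul, smul_eq_mul]
  rw [Matrix.trace_mul_comm (P) (A*Q), Matrix.trace_mul_comm (P) (A*(P*Q))]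
  simp only [Matrix.mul_assoc]
  ring

lemma aligned (k : Fin 4) (hH : (σ k)ᴴ = σ k) (Q : Matrix (Fin 2) (Fin 2) ℂ)
    (h2 : σ k * Q * σ k = Q) (hc : σ k * Q = Q * σ k)
    (θ : ℝ) (A : Matrix (Fin 2) (Fin 2) ℂ) :
    (W k θ * A * (W k θ)ᴴ * Q).trace = (A * Q).trace := by
  rw [conjT k hH]
  simp only [W]
  rw [trace_expand, h2, hc]
  have h1 : ((Real.cos θ:ℝ):ℂ)^2 + ((Real.sin θ:ℝ):ℂ)^2 = 1 := by
    exact_mod_cast congrArg (Complex.ofReal) (Real.cos_sq_add_sin_sq θ)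
  linear_combination (A*Q).trace * h1 - ((Real.sin θ:ℝ):ℂ)^2 * (A*Q).trace * Complex.I_mul_I

lemma mixed (k : Fin 4) (hH : (σ k)ᴴ = σ k) (Q : Matrix (Fin 2) (Fin 2) ℂ)
    (h2 : σ k * Q * σ k = -Q) (hc : σ k * Q = -(Q * σ k))
    (θ : ℝ) (A : Matrix (Fin 2) (Fin 2) ℂ) :
    (W k θ * A * (W k θ)ᴴ * Q).trace
    = ((Real.cos (2*θ):ℝ):ℂ) * (A*Q).trace
      - Complex.I * ((Real.sin (2*θ):ℝ):ℂ) * (A*Q*σ k).trace := by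
  rw [conjT k hH]
  simp only [W]
  rw [trace_expand, h2, hc]
  simp only [Matrix.mul_neg, trace_neg, ← Matrix.mul_assoc]
  have hcosR : Real.cos (2*θ) = Real.cos θ^2 - Real.sin θ^2 := by
    rw [Real.cos_two_mul, ← Real.sin_sq_add_cos_sq θ]; ring
  have hcos : ((Real.cos (2*θ):ℝ):ℂ) = ((Real.cos θ:ℝ):ℂ)^2 - ((Real.sin θ:ℝ):ℂ)^2 := by
    exact_mod_cast congrArg Complex.ofReal hcosR
  have hsin : ((Real.sin (2*θ):ℝ):ℂ) = 2*((Real.sin θ:ℝ):ℂ)*((Real.cos θ:ℝ):ℂ) := by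
    exact_mod_cast congrArg Complex.ofReal (Real.sin_two_mul θ)
  rw [hcos, hsin]
  linear_combination ((Real.sin θ:ℝ):ℂ)^2 * (A*Q).trace * Complex.I_mul_I

lemma main_aligned (k j : Fin 4) (hH : (σ k)ᴴ = σ k)
    (h2 : σ k * σ j * σ k = σ j) (hc : σ k * σ j = σ j * σ k)
    (hδ : δ j 0 + δ j k = 1) (A C : Matrix (Fin 2) (Fin 2) ℂ) :
    (1 / (2 * Real.pi) : ℂ) *
        ∫ θ in (0:ℝ)..(2 * Real.pi),
          (W k θ * A * (W k θ)ᴴ * σ j).trace * (W k θ * C * (W k θ)ᴴ * σ j).trace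
      = (1 / 2 + (δ j 0 + δ j k) / 2) * ((A * σ j).trace * (C * σ j).trace)
        + (-(1 / 2) + (δ j 0 + δ j k) / 2)
            * ((A * σ j * σ k).trace * (C * σ j * σ k).trace) := by
  have e := aligned k hH (σ j) h2 hc
  simp only [e]
  rw [intervalIntegral.integral_const, hδ, Complex.real_smul]
  have hπ : (Real.pi:ℂ) ≠ 0 := by exact_mod_cast Real.pi_ne_zero
  push_cast
  field_simp
  ring

lemma main_mixed (k j : Fin 4) (hH : (σ k)ᴴ = σ k)
    (h2 : σ k * σ j * σ k = -σ j) (hc : σ k * σ j = -(σ j * σ k))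
    (hδ : δ j 0 + δ j k = 0) (A C : Matrix (Fin 2) (Fin 2) ℂ) :
    (1 / (2 * Real.pi) : ℂ) *
        ∫ θ in (0:ℝ)..(2 * Real.pi),
          (W k θ * A * (W k θ)ᴴ * σ j).trace * (W k θ * C * (W k θ)ᴴ * σ j).trace
      = (1 / 2 + (δ j 0 + δ j k) / 2) * ((A * σ j).trace * (C * σ j).trace)
        + (-(1 / 2) + (δ j 0 + δ j k) / 2)
            * ((A * σ j * σ k).trace * (C * σ j * σ k).trace) := by
  have e := mixed k hH (σ j) h2 hc
  simp only [e]
  have e2 : ∀ θ:ℝ,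
      (((Real.cos (2*θ):ℝ):ℂ) * (A*σ j).trace
        - Complex.I * ((Real.sin (2*θ):ℝ):ℂ) * (A*σ j*σ k).trace) *
      (((Real.cos (2*θ):ℝ):ℂ) * (C*σ j).trace
        - Complex.I * ((Real.sin (2*θ):ℝ):ℂ) * (C*σ j*σ k).trace)
      = (0 + (A*σ j).trace * ((Real.cos (2*θ):ℝ):ℂ)
          + (-(Complex.I * (A*σ j*σ k).trace)) * ((Real.sin (2*θ):ℝ):ℂ)) *
        (0 + (C*σ j).trace * ((Real.cos (2*θ):ℝ):ℂ)
          + (-(Complex.I * (C*σ j*σ k).trace)) * ((Real.sin (2*θ):ℝ):ℂ)) := by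
    intro θ; ring
  simp only [e2]
  rw [key 0 ((A*σ j).trace) (-(Complex.I * (A*σ j*σ k).trace))
        0 ((C*σ j).trace) (-(Complex.I * (C*σ j*σ k).trace)), hδ]
  have hw : (-(Complex.I * (A*σ j*σ k).trace)) * (-(Complex.I * (C*σ j*σ k).trace))
      = -((A*σ j*σ k).trace * (C*σ j*σ k).trace) := by
    linear_combination (A*σ j*σ k).trace * (C*σ j*σ k).trace * Complex.I_mul_I
  rw [hw]
  have hπ : (Real.pi:ℂ) ≠ 0 := by exact_mod_cast Real.pi_ne_zero
  field_simp
  ring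

set_option maxHeartbeats 1000000 in
theorem avg_WAWB_WCWD (k : Fin 4) (hk : k = 1 ∨ k = 2 ∨ k = 3) (j : Fin 4)
    (A C : Matrix (Fin 2) (Fin 2) ℂ) (B D : Matrix (Fin 2) (Fin 2) ℂ)
    (hB : B = σ j) (hD : D = σ j) :
    (1 / (2 * Real.pi) : ℂ) *
        ∫ θ in (0:ℝ)..(2 * Real.pi),
          (W k θ * A * (W k θ)ᴴ * B).trace * (W k θ * C * (W k θ)ᴴ * D).trace
      = (1 / 2 + (δ j 0 + δ j k) / 2) * ((A * B).trace * (C * D).trace)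
        + (-(1 / 2) + (δ j 0 + δ j k) / 2)
            * ((A * B * σ k).trace * (C * D * σ k).trace) := by
  subst hB hD
  rcases hk with rfl | rfl | rfl <;> fin_cases j
  · exact main_aligned 1 0 (by ext i j; fin_cases i <;> fin_cases j <;> simp [σ, Matrix.conjTranspose_apply])
      (by ext i j; fin_cases i <;> fin_cases j <;> simp [σ, Matrix.mul_apply, Fin.sum_univ_two])
      (by ext i j; fin_cases i <;> fin_cases j <;> simp [σ, Matrix.mul_apply, Fin.sum_univ_two])
      (by norm_num [δ, show ¬((0:Fin 4) = 1) from by decide]) A C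
  · exact main_aligned 1 1 (by ext i j; fin_cases i <;> fin_cases j <;> simp [σ, Matrix.conjTranspose_apply])
      (by ext i j; fin_cases i <;> fin_cases j <;> simp [σ, Matrix.mul_apply, Fin.sum_univ_two])
      (by ext i j; fin_cases i <;> fin_cases j <;> simp [σ, Matrix.mul_apply, Fin.sum_univ_two])
      (by norm_num [δ, show ¬((1:Fin 4) = 0) from by decide]) A C
  · exact main_mixed 1 2 (by ext i j; fin_cases i <;> fin_cases j <;> simp [σ, Matrix.conjTranspose_apply])
      (by ext i j; fin_cases i <;> fin_cases j <;> simp [σ, Matrix.mul_apply, Fin.sum_univ_two])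
      (by ext i j; fin_cases i <;> fin_cases j <;> simp [σ, Matrix.mul_apply, Fin.sum_univ_two])
      (by norm_num [δ, show ¬((2:Fin 4) = 0) from by decide, show ¬((2:Fin 4) = 1) from by decide]) A C
  · exact main_mixed 1 3 (by ext i j; fin_cases i <;> fin_cases j <;> simp [σ, Matrix.conjTranspose_apply])
      (by ext i j; fin_cases i <;> fin_cases j <;> simp [σ, Matrix.mul_apply, Fin.sum_univ_two])
      (by ext i j; fin_cases i <;> fin_cases j <;> simp [σ, Matrix.mul_apply, Fin.sum_univ_two])
      (by norm_num [δ, show ¬((3:Fin 4) = 0) from by decide, show ¬((3:Fin 4) = 1) from by decide]) A C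
  · exact main_aligned 2 0 (by ext i j; fin_cases i <;> fin_cases j <;> simp [σ, Matrix.conjTranspose_apply])
      (by ext i j; fin_cases i <;> fin_cases j <;> simp [σ, Matrix.mul_apply, Fin.sum_univ_two])
      (by ext i j; fin_cases i <;> fin_cases j <;> simp [σ, Matrix.mul_apply, Fin.sum_univ_two])
      (by norm_num [δ, show ¬((0:Fin 4) = 2) from by decide]) A C
  · exact main_mixed 2 1 (by ext i j; fin_cases i <;> fin_cases j <;> simp [σ, Matrix.conjTranspose_apply])
      (by ext i j; fin_cases i <;> fin_cases j <;> simp [σ, Matrix.mul_apply, Fin.sum_univ_two])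
      (by ext i j; fin_cases i <;> fin_cases j <;> simp [σ, Matrix.mul_apply, Fin.sum_univ_two])
      (by norm_num [δ, show ¬((1:Fin 4) = 0) from by decide, show ¬((1:Fin 4) = 2) from by decide]) A C
  · exact main_aligned 2 2 (by ext i j; fin_cases i <;> fin_cases j <;> simp [σ, Matrix.conjTranspose_apply])
      (by ext i j; fin_cases i <;> fin_cases j <;> simp [σ, Matrix.mul_apply, Fin.sum_univ_two])
      (by ext i j; fin_cases i <;> fin_cases j <;> simp [σ, Matrix.mul_apply, Fin.sum_univ_two])
      (by norm_num [δ, show ¬((2:Fin 4) = 0) from by decide]) A C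
  · exact main_mixed 2 3 (by ext i j; fin_cases i <;> fin_cases j <;> simp [σ, Matrix.conjTranspose_apply])
      (by ext i j; fin_cases i <;> fin_cases j <;> simp [σ, Matrix.mul_apply, Fin.sum_univ_two])
      (by ext i j; fin_cases i <;> fin_cases j <;> simp [σ, Matrix.mul_apply, Fin.sum_univ_two])
      (by norm_num [δ, show ¬((3:Fin 4) = 0) from by decide, show ¬((3:Fin 4) = 2) from by decide]) A C
  · exact main_aligned 3 0 (by ext i j; fin_cases i <;> fin_cases j <;> simp [σ, Matrix.conjTranspose_apply])
      (by ext i j; fin_cases i <;> fin_cases j <;> simp [σ, Matrix.mul_apply, Fin.sum_univ_two])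
      (by ext i j; fin_cases i <;> fin_cases j <;> simp [σ, Matrix.mul_apply, Fin.sum_univ_two])
      (by norm_num [δ, show ¬((0:Fin 4) = 3) from by decide]) A C
  · exact main_mixed 3 1 (by ext i j; fin_cases i <;> fin_cases j <;> simp [σ, Matrix.conjTranspose_apply])
      (by ext i j; fin_cases i <;> fin_cases j <;> simp [σ, Matrix.mul_apply, Fin.sum_univ_two])
      (by ext i j; fin_cases i <;> fin_cases j <;> simp [σ, Matrix.mul_apply, Fin.sum_univ_two])
      (by norm_num [δ, show ¬((1:Fin 4) = 0) from by decide, show ¬((1:Fin 4) = 3) from by decide]) A C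
  · exact main_mixed 3 2 (by ext i j; fin_cases i <;> fin_cases j <;> simp [σ, Matrix.conjTranspose_apply])
      (by ext i j; fin_cases i <;> fin_cases j <;> simp [σ, Matrix.mul_apply, Fin.sum_univ_two])
      (by ext i j; fin_cases i <;> fin_cases j <;> simp [σ, Matrix.mul_apply, Fin.sum_univ_two])
      (by norm_num [δ, show ¬((2:Fin 4) = 0) from by decide, show ¬((2:Fin 4) = 3) from by decide]) A C
  · exact main_aligned 3 3 (by ext i j; fin_cases i <;> fin_cases j <;> simp [σ, Matrix.conjTranspose_apply])
      (by ext i j; fin_cases i <;> fin_cases j <;> simp [σ, Matrix.mul_apply, Fin.sum_univ_two])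
      (by ext i j; fin_cases i <;> fin_cases j <;> simp [σ, Matrix.mul_apply, Fin.sum_univ_two])
      (by norm_num [δ, show ¬((3:Fin 4) = 0) from by decide]) A C
end

section
/- Fix k ∈ {1,2,3} and j ∈ {0,1,2,3}, let W(θ) = exp(−iθσₖ) = I cos θ − i σₖ sin θ and G(θ) = dW/dθ = −I sin θ − i σₖ cos θ. For any 2×2 complex matrices A and C, with B = D = σⱼ: (1/(2π)) ∫₀^{2π} Tr[G(θ) A W(θ)† B] · Tr[G(θ) C W(θ)† D] dθ = (1/2 − (δ_{j0}+δ_{jk})/2) Tr[AB] Tr[CD] + (−1/2 − (δ_{j0}+δ_{jk})/2) Tr[ABσₖ] Tr[CDσₖ]. -/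
set_option maxHeartbeats 2000000

open Matrix Complex intervalIntegral

/-- The derivative `G(θ) = dW/dθ = -I sin θ - i σₖ cos θ`. -/
noncomputable def G (k : Fin 4) (θ : ℝ) : Matrix (Fin 2) (Fin 2) ℂ :=
  (-(Real.sin θ : ℂ)) • (1 : Matrix (Fin 2) (Fin 2) ℂ)
    - (Complex.I * (Real.cos θ : ℂ)) • σ k

section auxInts
open Real intervalIntegral

lemma Isin4 : ∫ θ in (0:ℝ)..(2*π), Real.sin θ ^ 4 = 3*π/4 := by
  have h := @integral_sin_pow 0 (2*π) 2
  simp [Real.sin_two_pi] at h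
  rw [show (4:ℕ) = 2+2 by rfl, h]; ring

lemma Icos4 : ∫ θ in (0:ℝ)..(2*π), Real.cos θ ^ 4 = 3*π/4 := by
  have h := @integral_cos_pow 0 (2*π) 2
  simp [Real.sin_two_pi] at h
  rw [show (4:ℕ) = 2+2 by rfl, h]; ring

lemma Is2c2 : ∫ θ in (0:ℝ)..(2*π), Real.sin θ ^ 2 * Real.cos θ ^ 2 = π/4 := by
  have : ∀ θ : ℝ, Real.sin θ ^ 2 * Real.cos θ ^ 2 = Real.sin θ ^ 2 - Real.sin θ ^ 4 := by
    intro θ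
    have := Real.sin_sq_add_cos_sq θ
    nlinarith [this]
  rw [intervalIntegral.integral_congr (fun θ _ => this θ), integral_sub, Isin4, integral_sin_sq]
  · simp [Real.sin_two_pi]; ring
  · exact (Real.continuous_sin.pow 2).intervalIntegrable _ _
  · exact (Real.continuous_sin.pow 4).intervalIntegrable _ _

lemma Is3c : ∫ θ in (0:ℝ)..(2*π), Real.sin θ ^ 3 * Real.cos θ = 0 := by
  have h := @integral_sin_pow_mul_cos_pow_odd 0 (2*π) 3 0
  simp [Real.sin_two_pi] at h
  simpa using h

lemma Isc3 : ∫ θ in (0:ℝ)..(2*π), Real.sin θ * Real.cos θ ^ 3 = 0 := by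
  have h := @integral_sin_pow_mul_cos_pow_odd 0 (2*π) 1 1
  simp [Real.sin_two_pi] at h
  simpa using h

lemma key_s11 (p q r p' q' r' : ℂ) :
    (∫ θ in (0:ℝ)..(2*π),
      (p * (Real.sin θ : ℂ) * (Real.cos θ : ℂ) + q * (Real.sin θ : ℂ)^2 + r * (Real.cos θ : ℂ)^2)
      * (p' * (Real.sin θ : ℂ) * (Real.cos θ : ℂ) + q' * (Real.sin θ : ℂ)^2 + r' * (Real.cos θ : ℂ)^2))
    = ((π:ℂ)/4) * (p*p' + q*r' + r*q') + (3*(π:ℂ)/4) * (q*q' + r*r') := by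
  have hpt : ∀ θ : ℝ, ∀ _ : θ ∈ Set.uIcc (0:ℝ) (2*π),
      (p * (Real.sin θ : ℂ) * (Real.cos θ : ℂ) + q * (Real.sin θ : ℂ)^2 + r * (Real.cos θ : ℂ)^2)
      * (p' * (Real.sin θ : ℂ) * (Real.cos θ : ℂ) + q' * (Real.sin θ : ℂ)^2 + r' * (Real.cos θ : ℂ)^2)
      = (p*p'+q*r'+r*q') * ((Real.sin θ^2 * Real.cos θ^2 : ℝ) : ℂ)
        + ((q*q') * ((Real.sin θ^4 : ℝ) : ℂ)
        + ((r*r') * ((Real.cos θ^4 : ℝ) : ℂ)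
        + ((p*q'+q*p') * ((Real.sin θ^3 * Real.cos θ : ℝ) : ℂ)
        + (p*r'+r*p') * ((Real.sin θ * Real.cos θ^3 : ℝ) : ℂ)))) := by
    intro θ _
    push_cast
    ring
  rw [intervalIntegral.integral_congr hpt]
  have i1 : IntervalIntegrable (fun θ : ℝ => (p*p'+q*r'+r*q') * ((Real.sin θ^2 * Real.cos θ^2 : ℝ) : ℂ)) MeasureTheory.volume 0 (2*π) := by
    apply Continuous.intervalIntegrable; fun_prop
  have i2 : IntervalIntegrable (fun θ : ℝ => (q*q') * ((Real.sin θ^4 : ℝ) : ℂ)) MeasureTheory.volume 0 (2*π) := by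
    apply Continuous.intervalIntegrable; fun_prop
  have i3 : IntervalIntegrable (fun θ : ℝ => (r*r') * ((Real.cos θ^4 : ℝ) : ℂ)) MeasureTheory.volume 0 (2*π) := by
    apply Continuous.intervalIntegrable; fun_prop
  have i4 : IntervalIntegrable (fun θ : ℝ => (p*q'+q*p') * ((Real.sin θ^3 * Real.cos θ : ℝ) : ℂ)) MeasureTheory.volume 0 (2*π) := by
    apply Continuous.intervalIntegrable; fun_prop
  have i5 : IntervalIntegrable (fun θ : ℝ => (p*r'+r*p') * ((Real.sin θ * Real.cos θ^3 : ℝ) : ℂ)) MeasureTheory.volume 0 (2*π) := by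
    apply Continuous.intervalIntegrable; fun_prop
  rw [integral_add i1 (i2.add (i3.add (i4.add i5))), integral_add i2 (i3.add (i4.add i5)),
    integral_add i3 (i4.add i5), integral_add i4 i5]
  simp only [intervalIntegral.integral_const_mul, intervalIntegral.integral_ofReal,
    Isin4, Icos4, Is2c2, Is3c, Isc3]
  push_cast
  ring

end auxInts

lemma I4 : Complex.I ^ 4 = 1 := by
  norm_num [pow_succ, Complex.I_mul_I]

lemma I6 : Complex.I ^ 6 = -1 := by
  norm_num [pow_succ, Complex.I_mul_I]

lemma I8 : Complex.I ^ 8 = 1 := by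
  norm_num [pow_succ, Complex.I_mul_I]

lemma I3 : Complex.I ^ 3 = -Complex.I := by
  norm_num [pow_succ, Complex.I_mul_I]

lemma sigma_herm (k : Fin 4) : (σ k)ᴴ = σ k := by
  fin_cases k <;>
  · ext i j
    fin_cases i <;> fin_cases j <;>
      simp [σ, Matrix.conjTranspose_apply, Matrix.one_apply]

lemma Wconj (k : Fin 4) (θ : ℝ) :
    (W k θ)ᴴ = (Real.cos θ : ℂ) • (1 : Matrix (Fin 2) (Fin 2) ℂ)
      + (Complex.I * (Real.sin θ : ℂ)) • σ k := by
  have h1 : star ((Real.cos θ : ℂ)) = (Real.cos θ : ℂ) := by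
    rw [Complex.star_def, Complex.conj_ofReal]
  have h2 : star (Complex.I * (Real.sin θ : ℂ)) = -(Complex.I * (Real.sin θ : ℂ)) := by
    rw [Complex.star_def, _root_.map_mul, Complex.conj_I, Complex.conj_ofReal]; ring
  rw [W, Matrix.conjTranspose_sub, Matrix.conjTranspose_smul, Matrix.conjTranspose_smul,
    Matrix.conjTranspose_one, sigma_herm, h1, h2, neg_smul, sub_neg_eq_add]

lemma trace_form (k : Fin 4) (θ : ℝ) (A B : Matrix (Fin 2) (Fin 2) ℂ) :
    (G k θ * A * (W k θ)ᴴ * B).trace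
      = ((σ k * A * σ k * B).trace - (A * B).trace)
          * (Real.sin θ : ℂ) * (Real.cos θ : ℂ)
        + (-Complex.I * (A * σ k * B).trace) * (Real.sin θ : ℂ)^2
        + (-Complex.I * (σ k * A * B).trace) * (Real.cos θ : ℂ)^2 := by
  rw [Wconj, G]
  simp only [Matrix.sub_mul, Matrix.add_mul, Matrix.mul_add, Matrix.smul_mul,
    Matrix.mul_smul, Matrix.one_mul, Matrix.mul_one, Matrix.trace_add, Matrix.trace_sub,
    Matrix.trace_smul, smul_smul, smul_eq_mul]
  ring_nf
  linear_combination (-((Real.cos θ : ℂ) * (Real.sin θ : ℂ)) * (σ k * A * σ k * B).trace) * Complex.I_sq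

theorem avg_GAWB_GCWD (k : Fin 4) (hk : k = 1 ∨ k = 2 ∨ k = 3) (j : Fin 4)
    (A C : Matrix (Fin 2) (Fin 2) ℂ) (B D : Matrix (Fin 2) (Fin 2) ℂ)
    (hB : B = σ j) (hD : D = σ j) :
    (1 / (2 * Real.pi) : ℂ) *
        ∫ θ in (0:ℝ)..(2 * Real.pi),
          (G k θ * A * (W k θ)ᴴ * B).trace * (G k θ * C * (W k θ)ᴴ * D).trace
      = (1 / 2 - (δ j 0 + δ j k) / 2) * ((A * B).trace * (C * D).trace)
        + (-(1 / 2) - (δ j 0 + δ j k) / 2)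
            * ((A * B * σ k).trace * (C * D * σ k).trace) := by
  subst hB hD
  have hcong : (∫ θ in (0:ℝ)..(2 * Real.pi),
        (G k θ * A * (W k θ)ᴴ * σ j).trace * (G k θ * C * (W k θ)ᴴ * σ j).trace)
      = ∫ θ in (0:ℝ)..(2 * Real.pi),
        (((σ k * A * σ k * σ j).trace - (A * σ j).trace) * (Real.sin θ : ℂ) * (Real.cos θ : ℂ)
          + (-Complex.I * (A * σ k * σ j).trace) * (Real.sin θ : ℂ)^2
          + (-Complex.I * (σ k * A * σ j).trace) * (Real.cos θ : ℂ)^2)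
        * (((σ k * C * σ k * σ j).trace - (C * σ j).trace) * (Real.sin θ : ℂ) * (Real.cos θ : ℂ)
          + (-Complex.I * (C * σ k * σ j).trace) * (Real.sin θ : ℂ)^2
          + (-Complex.I * (σ k * C * σ j).trace) * (Real.cos θ : ℂ)^2) :=
    intervalIntegral.integral_congr (fun θ _ => by rw [trace_form, trace_form])
  rw [hcong, key_s11]
  have hπ : (Real.pi : ℂ) ≠ 0 := by exact_mod_cast Real.pi_ne_zero
  have hj : ∀ x : Fin 4, x = 0 ∨ x = 1 ∨ x = 2 ∨ x = 3 := by decide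
  rcases hk with rfl | rfl | rfl <;> rcases hj j with rfl | rfl | rfl | rfl <;>
  · rw [Matrix.eta_fin_two A, Matrix.eta_fin_two C]
    simp [σ, δ, Matrix.mul_fin_two, Matrix.trace_fin_two, Matrix.one_fin_two]
    try field_simp
    try ring_nf
    try simp only [Complex.I_sq, I3, I4, I6, I8]
    try ring
end

section
/- Fix k ∈ {1,2,3} and j ∈ {0,1,2,3} with δ_{j0} + δ_{jk} = 0 (i.e., j ≠ 0 and j ≠ k), let W(θ) = I cos θ − i σₖ sin θ and G(θ) = −I sin θ − i σₖ cos θ. Then for any 2×2 complex matrices A, C and B = D = σⱼ: (1/(2π)) ∫₀^{2π} Tr[W A W† B] Tr[W C W† D] dθ = (1/(2π)) ∫₀^{2π} Tr[G A W† B] Tr[G C W† D] dθ = (1/2) Tr[AB] Tr[CD] − (1/2) Tr[ABσₖ] Tr[CDσₖ]. -/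
open Matrix Complex intervalIntegral

lemma trace_W_aux (k j : Fin 4) (hk : k = 1 ∨ k = 2 ∨ k = 3) (hj0 : j ≠ 0) (hjk : j ≠ k)
    (A : Matrix (Fin 2) (Fin 2) ℂ) (θ : ℝ) :
    (W k θ * A * (W k θ)ᴴ * σ j).trace =
      ((Real.cos θ : ℂ)^2 - (Real.sin θ : ℂ)^2) * (A * σ j).trace
        + (2 * (Real.sin θ : ℂ) * (Real.cos θ : ℂ)) * (-Complex.I * (A * σ j * σ k).trace) := by
  rcases hk with rfl | rfl | rfl <;> fin_cases j <;>
      first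
      | exact absurd rfl hj0
      | exact absurd rfl hjk
      | (simp [W, σ, Matrix.trace, Matrix.diag, Matrix.mul_apply, Fin.sum_univ_succ,
          Matrix.conjTranspose_apply, Matrix.one_apply, Matrix.sub_apply, Matrix.smul_apply,
          Complex.conj_ofReal, Complex.conj_I, -Complex.ofReal_cos, -Complex.ofReal_sin]
         ring_nf
         try simp only [show (Complex.I)^2 = -1 from Complex.I_sq,
           show (Complex.I)^3 = -Complex.I by rw [pow_succ, Complex.I_sq]; ring,
           show (Complex.I)^4 = 1 by rw [show (4:ℕ) = 2+2 by norm_num, pow_add, Complex.I_sq]; ring]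
         try ring)

lemma trace_G_aux (k j : Fin 4) (hk : k = 1 ∨ k = 2 ∨ k = 3) (hj0 : j ≠ 0) (hjk : j ≠ k)
    (A : Matrix (Fin 2) (Fin 2) ℂ) (θ : ℝ) :
    (G k θ * A * (W k θ)ᴴ * σ j).trace =
      ((Real.cos θ : ℂ)^2 - (Real.sin θ : ℂ)^2) * (-Complex.I * (A * σ j * σ k).trace)
        + (2 * (Real.sin θ : ℂ) * (Real.cos θ : ℂ)) * (-(A * σ j).trace) := by
  rcases hk with rfl | rfl | rfl <;> fin_cases j <;>
      first
      | exact absurd rfl hj0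
      | exact absurd rfl hjk
      | (simp [W, G, σ, Matrix.trace, Matrix.diag, Matrix.mul_apply, Fin.sum_univ_succ,
          Matrix.conjTranspose_apply, Matrix.one_apply, Matrix.sub_apply, Matrix.smul_apply,
          Complex.conj_ofReal, Complex.conj_I, -Complex.ofReal_cos, -Complex.ofReal_sin]
         ring_nf
         try simp only [show (Complex.I)^2 = -1 from Complex.I_sq,
           show (Complex.I)^3 = -Complex.I by rw [pow_succ, Complex.I_sq]; ring,
           show (Complex.I)^4 = 1 by rw [show (4:ℕ) = 2+2 by norm_num, pow_add, Complex.I_sq]; ring]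
         try ring)

lemma key_integral (u v u' v' : ℂ) :
    (∫ θ in (0:ℝ)..(2 * Real.pi),
      (((Real.cos θ : ℂ)^2 - (Real.sin θ : ℂ)^2) * u + (2 * (Real.sin θ : ℂ) * (Real.cos θ : ℂ)) * v) *
      (((Real.cos θ : ℂ)^2 - (Real.sin θ : ℂ)^2) * u' + (2 * (Real.sin θ : ℂ) * (Real.cos θ : ℂ)) * v'))
      = (Real.pi : ℂ) * (u * u' + v * v') := by
  have hderiv : ∀ x ∈ Set.uIcc (0:ℝ) (2 * Real.pi),
      HasDerivAt (fun θ : ℝ =>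
        ((θ : ℂ)/2 + Complex.sin (4*θ)/8) * (u * u')
          + Complex.sin (2*θ) * Complex.sin (2*θ) / 4 * (u * v' + v * u')
          + ((θ : ℂ)/2 - Complex.sin (4*θ)/8) * (v * v'))
      ((((Real.cos x : ℂ)^2 - (Real.sin x : ℂ)^2) * u + (2 * (Real.sin x : ℂ) * (Real.cos x : ℂ)) * v) *
       (((Real.cos x : ℂ)^2 - (Real.sin x : ℂ)^2) * u' + (2 * (Real.sin x : ℂ) * (Real.cos x : ℂ)) * v')) x := by
    intro x _
    have ht : HasDerivAt (fun θ : ℝ => (θ : ℂ)) 1 x := by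
      simpa using (hasDerivAt_id x).ofReal_comp
    have hs4 : HasDerivAt (fun θ : ℝ => Complex.sin (4*θ)) (4 * Complex.cos (4*x)) x := by
      have hin : HasDerivAt (fun z : ℂ => 4*z) 4 (x : ℂ) := by
        simpa using (hasDerivAt_id (x:ℂ)).const_mul (4:ℂ)
      have h1 := (Complex.hasDerivAt_sin (4*(x:ℂ))).comp (x:ℂ) hin
      simpa [Function.comp, mul_comm] using h1.comp_ofReal
    have hs2 : HasDerivAt (fun θ : ℝ => Complex.sin (2*θ)) (2 * Complex.cos (2*x)) x := by
      have hin : HasDerivAt (fun z : ℂ => 2*z) 2 (x : ℂ) := by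
        simpa using (hasDerivAt_id (x:ℂ)).const_mul (2:ℂ)
      have h1 := (Complex.hasDerivAt_sin (2*(x:ℂ))).comp (x:ℂ) hin
      simpa [Function.comp, mul_comm] using h1.comp_ofReal
    have hsq : HasDerivAt (fun θ : ℝ => Complex.sin (2*θ) * Complex.sin (2*θ))
        (2 * Complex.cos (2*x) * Complex.sin (2*x) + Complex.sin (2*x) * (2 * Complex.cos (2*x))) x :=
      hs2.mul hs2
    have hD := (((ht.div_const 2).add (hs4.div_const 8)).mul_const (u*u')).add
      (((hsq.div_const 4).mul_const (u*v' + v*u')).add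
        (((ht.div_const 2).sub (hs4.div_const 8)).mul_const (v*v')))
    refine HasDerivAt.congr_of_eventuallyEq (hD.congr_deriv ?_)
      (by filter_upwards with y; simp only [Pi.add_apply, Pi.sub_apply]; ring)
    · -- derivative value equality
      have e4 : Complex.cos (4*(x:ℂ)) = Complex.cos (2*(2*(x:ℂ))) := by ring_nf
      have e2s : Complex.sin (2*(x:ℂ)) = 2 * Complex.sin x * Complex.cos x :=
        Complex.sin_two_mul x
      have e2c : Complex.cos (2*(x:ℂ)) = Complex.cos x ^ 2 - Complex.sin x ^ 2 :=
        Complex.cos_two_mul' x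
      have hpyth : Complex.sin (x:ℂ) ^ 2 + Complex.cos (x:ℂ) ^ 2 = 1 :=
        Complex.sin_sq_add_cos_sq x
      rw [e4, Complex.cos_two_mul', e2s, e2c, Complex.ofReal_cos, Complex.ofReal_sin]
      linear_combination (-(u*u' + v*v') * (Complex.sin (x:ℂ)^2 + Complex.cos (x:ℂ)^2 + 1) / 2) * hpyth
  have hint : IntervalIntegrable (fun θ : ℝ =>
      (((Real.cos θ : ℂ)^2 - (Real.sin θ : ℂ)^2) * u + (2 * (Real.sin θ : ℂ) * (Real.cos θ : ℂ)) * v) *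
      (((Real.cos θ : ℂ)^2 - (Real.sin θ : ℂ)^2) * u' + (2 * (Real.sin θ : ℂ) * (Real.cos θ : ℂ)) * v'))
      MeasureTheory.volume 0 (2 * Real.pi) := by
    apply Continuous.intervalIntegrable
    fun_prop
  rw [intervalIntegral.integral_eq_sub_of_hasDerivAt hderiv hint]
  have h8 : ∀ z : ℂ, z = ((8 * Real.pi : ℝ) : ℂ) → Complex.sin z = 0 := by
    rintro z rfl
    rw [← Complex.ofReal_sin]
    norm_cast
    simpa using Real.sin_nat_mul_pi 8
  have h4 : ∀ z : ℂ, z = ((4 * Real.pi : ℝ) : ℂ) → Complex.sin z = 0 := by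
    rintro z rfl
    rw [← Complex.ofReal_sin]
    norm_cast
    simpa using Real.sin_nat_mul_pi 4
  rw [show Complex.sin (4 * ((2*Real.pi : ℝ) : ℂ)) = 0 from h8 _ (by push_cast; ring),
    show Complex.sin (2 * ((2*Real.pi : ℝ) : ℂ)) = 0 from h4 _ (by push_cast; ring)]
  try push_cast
  try simp
  try push_cast
  try ring

theorem avg_WAWB_eq_avg_GAWB (k : Fin 4) (hk : k = 1 ∨ k = 2 ∨ k = 3) (j : Fin 4)
    (hj0 : j ≠ 0) (hjk : j ≠ k)
    (A C : Matrix (Fin 2) (Fin 2) ℂ) (B D : Matrix (Fin 2) (Fin 2) ℂ)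
    (hB : B = σ j) (hD : D = σ j) :
    ((1 / (2 * Real.pi) : ℂ) *
        ∫ θ in (0:ℝ)..(2 * Real.pi),
          (W k θ * A * (W k θ)ᴴ * B).trace * (W k θ * C * (W k θ)ᴴ * D).trace
      = (1 / 2) * ((A * B).trace * (C * D).trace)
        - (1 / 2) * ((A * B * σ k).trace * (C * D * σ k).trace)) ∧
    ((1 / (2 * Real.pi) : ℂ) *
        ∫ θ in (0:ℝ)..(2 * Real.pi),
          (G k θ * A * (W k θ)ᴴ * B).trace * (G k θ * C * (W k θ)ᴴ * D).trace
      = (1 / 2) * ((A * B).trace * (C * D).trace)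
        - (1 / 2) * ((A * B * σ k).trace * (C * D * σ k).trace)) := by
  subst hB hD
  have hπ : (Real.pi : ℂ) ≠ 0 := by exact_mod_cast Real.pi_ne_zero
  constructor
  · simp only [trace_W_aux k j hk hj0 hjk A, trace_W_aux k j hk hj0 hjk C]
    rw [key_integral]
    field_simp
    ring_nf
    try simp [Complex.I_sq]
    try ring_nf
    try ring
  · simp only [trace_G_aux k j hk hj0 hjk A, trace_G_aux k j hk hj0 hjk C]
    rw [key_integral]
    field_simp
    ring_nf
    try simp [Complex.I_sq]
    try ring_nf
    try ring
end

section
/- Let O and V(θ₁,...,θ_p) be as follows: V is a product of factors in which θⱼ enters only through a single-qubit rotation e^{−iθⱼσₖ} (k ∈ {1,2,3}), and define f(θ) = (1 + Tr[O · V(θ) ρ V(θ)†])/2 for a density matrix ρ. Then the parameter shift rule holds: ∂f/∂θⱼ = f(θ + (π/4)eⱼ) − f(θ − (π/4)eⱼ). In the single-parameter, single-qubit case this reduces to: for g(θ) = Tr[O' e^{−iθσₖ} ρ' e^{iθσₖ}], one has g'(θ) = g(θ + π/4) − g(θ − π/4). -/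
open Matrix Complex

/-- The inverse rotation `e^{iθσₖ} = I cos θ + i σₖ sin θ`. -/
noncomputable def Winv (k : Fin 4) (θ : ℝ) : Matrix (Fin 2) (Fin 2) ℂ :=
  (Real.cos θ : ℂ) • (1 : Matrix (Fin 2) (Fin 2) ℂ)
    + (Complex.I * (Real.sin θ : ℂ)) • σ k

lemma expand_trace (k : Fin 4) (O' ρ' : Matrix (Fin 2) (Fin 2) ℂ) (t : ℝ) :
    (O' * W k t * ρ' * Winv k t).trace
      = (Real.cos t : ℂ)^2 * (O' * ρ').trace
        + (Real.sin t : ℂ)^2 * (O' * σ k * ρ' * σ k).trace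
        + Complex.I * ((Real.sin t : ℂ) * (Real.cos t : ℂ))
            * ((O' * ρ' * σ k).trace - (O' * (σ k * ρ')).trace) := by
  simp only [W, Winv, Matrix.mul_add, Matrix.add_mul, Matrix.mul_sub, Matrix.sub_mul,
    Matrix.mul_smul, Matrix.smul_mul, Matrix.mul_one, Matrix.trace_add, Matrix.trace_sub,
    Matrix.trace_smul, smul_eq_mul, smul_smul, Matrix.mul_assoc]
  ring_nf
  rw [Complex.I_sq]
  ring

/-- The parameter shift rule: for
`g(θ) = Tr[O' e^{-iθσₖ} ρ' e^{iθσₖ}]`, one has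
`g'(θ) = g(θ + π/4) - g(θ - π/4)`. -/
theorem parameter_shift_rule (k : Fin 4) (hk : k = 1 ∨ k = 2 ∨ k = 3)
    (O' ρ' : Matrix (Fin 2) (Fin 2) ℂ) (θ : ℝ) :
    HasDerivAt (fun t : ℝ => (O' * W k t * ρ' * Winv k t).trace)
      ((O' * W k (θ + Real.pi / 4) * ρ' * Winv k (θ + Real.pi / 4)).trace
        - (O' * W k (θ - Real.pi / 4) * ρ' * Winv k (θ - Real.pi / 4)).trace) θ := by
  set a := (O' * ρ').trace with ha
  set b := (O' * σ k * ρ' * σ k).trace with hb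
  set d := (O' * ρ' * σ k).trace - (O' * (σ k * ρ')).trace with hd
  have hc : HasDerivAt (fun t : ℝ => ((Real.cos t : ℂ)))
      ((-Real.sin θ : ℝ) : ℂ) θ := (Real.hasDerivAt_cos θ).ofReal_comp
  have hs : HasDerivAt (fun t : ℝ => ((Real.sin t : ℂ)))
      ((Real.cos θ : ℝ) : ℂ) θ := (Real.hasDerivAt_sin θ).ofReal_comp
  have h1 := ((((hc.mul hc)).mul_const a).add (((hs.mul hs)).mul_const b)).add
      (((hs.mul hc).const_mul Complex.I).mul_const d)
  have hfun : (fun t : ℝ => (O' * W k t * ρ' * Winv k t).trace)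
      = fun t : ℝ => (Real.cos t : ℂ) * (Real.cos t : ℂ) * a
        + (Real.sin t : ℂ) * (Real.sin t : ℂ) * b
        + Complex.I * ((Real.sin t : ℂ) * (Real.cos t : ℂ)) * d := by
    funext t; rw [expand_trace]; ring
  rw [hfun, expand_trace, expand_trace]
  convert h1 using 1
  case e'_4 => rfl
  case e'_8 => rfl
  have hsq : ((Real.sqrt 2 : ℝ) : ℂ) ^ 2 = 2 := by
    norm_cast
    rw [Real.sq_sqrt] <;> norm_num
  simp only [Real.cos_add, Real.sin_add, Real.cos_sub, Real.sin_sub,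
    Real.cos_pi_div_four, Real.sin_pi_div_four, Complex.ofReal_sub, Complex.ofReal_add,
    Complex.ofReal_mul, Complex.ofReal_div, Complex.ofReal_neg, Complex.ofReal_ofNat,
    Nat.cast_ofNat, pow_one]
  linear_combination (-(Real.sin θ : ℂ) * (Real.cos θ : ℂ) * a
    + (Real.sin θ : ℂ) * (Real.cos θ : ℂ) * b
    + Complex.I / 2 * ((Real.cos θ : ℂ)^2 - (Real.sin θ : ℂ)^2) * d) * hsq
end
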